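/- arXiv:2405.11981 — 7 statements merged into one kernel-verified Lean document; each statement's English description precedes it below -/
import Mathlib

section
/- For all natural numbers n and d, the multiplicity m(n,d) defined by the recurrence m(0,0)=1, m(n,0)=0 for n>0, m(0,d)=m(1,d-1) for d>0, and m(n,d)=m(n+1,d-1)+m(n,d-1)+m(n-1,d-1) for n>0, d>0, satisfies m(n,d) = T(n,d) - T(n+1,d), where T(n,d) is the coefficient of x^{n+d} in the polynomial (1+x+x^2)^d. -/
open Polynomial

/-- The multiplicity `m(n,d)` of the irreducible `OSp(1|2)`-module `L(n)` in `V^{⊗d}`,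
defined by the recurrence `m(0,0)=1`, `m(n,0)=0` for `n>0`, `m(0,d)=m(1,d-1)` and
`m(n,d)=m(n+1,d-1)+m(n,d-1)+m(n-1,d-1)` for `n>0, d>0`. -/
def ospMult : ℕ → ℕ → ℤ
  | 0, 0 => 1
  | _ + 1, 0 => 0
  | 0, d + 1 => ospMult 1 d
  | n + 1, d + 1 => ospMult (n + 2) d + ospMult (n + 1) d + ospMult n d
  termination_by n d => d

/-- `trinomialCoeff n d` is the coefficient of `x^(n+d)` in `(1+x+x^2)^d`. -/
noncomputable def trinomialCoeff (n d : ℕ) : ℤ :=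
  (((1 : Polynomial ℤ) + X + X ^ 2) ^ d).coeff (n + d)

/-- The trinomial `1 + X + X²` over `ℤ`. -/
noncomputable def triP : Polynomial ℤ := 1 + X + X ^ 2

lemma coeff_triP_mul (Q : Polynomial ℤ) (k : ℕ) :
    (triP * Q).coeff (k + 2) = Q.coeff (k + 2) + Q.coeff (k + 1) + Q.coeff k := by
  have h1 : (X * Q).coeff (k + 2) = Q.coeff (k + 1) := coeff_X_mul Q (k + 1)
  have h2 : (X ^ 2 * Q).coeff (k + 2) = Q.coeff k := coeff_X_pow_mul Q 2 k
  simp [triP, add_mul, h1, h2]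

lemma triP_natDegree : triP.natDegree = 2 := by
  unfold triP; compute_degree!

lemma triP_coeff_zero : triP.coeff 0 = 1 := by simp [triP]

lemma triP_mirror : triP.mirror = triP := by
  have h0 : triP.natTrailingDegree = 0 := by
    rw [natTrailingDegree_eq_zero]; right; simp [triP_coeff_zero]
  ext n
  rw [coeff_mirror, triP_natDegree, h0]
  match n with
  | 0 => simp [triP, coeff_one, coeff_X]
  | 1 => simp [triP, coeff_one, coeff_X]
  | 2 => simp [triP, coeff_one, coeff_X]
  | (m+3) =>
    rw [revAt_eq_self_of_lt (by omega)]

lemma triP_pow_mirror (d : ℕ) : (triP ^ d).mirror = triP ^ d := by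
  induction d with
  | zero => simpa using mirror_C (1 : ℤ)
  | succ d ih => rw [pow_succ, mirror_mul_of_domain, ih, triP_mirror]

lemma triP_pow_natDegree (d : ℕ) : (triP ^ d).natDegree = 2 * d := by
  have : triP.leadingCoeff = 1 := by
    rw [leadingCoeff, triP_natDegree]; simp [triP, coeff_one, coeff_X]
  rw [natDegree_pow' (by rw [this]; simp), triP_natDegree, mul_comm]

lemma triP_pow_natTrailingDegree (d : ℕ) : (triP ^ d).natTrailingDegree = 0 := by
  rw [natTrailingDegree_eq_zero]; right
  rw [coeff_zero_eq_eval_zero, eval_pow]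
  have : triP.eval 0 = 1 := by simp [triP]
  rw [this, one_pow]; norm_num

lemma triP_symm (d : ℕ) : (triP ^ (d + 1)).coeff (d + 2) = (triP ^ (d + 1)).coeff d := by
  have h := coeff_mirror (triP ^ (d + 1)) (d + 2)
  rw [triP_pow_mirror, triP_pow_natDegree, triP_pow_natTrailingDegree,
    revAt_le (by omega)] at h
  have : 2 * (d + 1) + 0 - (d + 2) = d := by omega
  rwa [this] at h

lemma trinomialCoeff_def (n d : ℕ) : trinomialCoeff n d = (triP ^ d).coeff (n + d) := rfl

lemma tri_rec (n d : ℕ) : trinomialCoeff (n + 1) (d + 1) =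
    trinomialCoeff (n + 2) d + trinomialCoeff (n + 1) d + trinomialCoeff n d := by
  simp only [trinomialCoeff_def]
  rw [pow_succ']
  have h := coeff_triP_mul (triP ^ d) (n + d)
  have e1 : n + 1 + (d + 1) = n + d + 2 := by omega
  have e2 : n + 2 + d = n + d + 2 := by omega
  have e3 : n + 1 + d = n + d + 1 := by omega
  rw [e1, e2, e3, h]

lemma tri_rec0 (d : ℕ) : trinomialCoeff 0 (d + 1) =
    2 * trinomialCoeff 1 d + trinomialCoeff 0 d := by
  cases d with
  | zero =>
    simp only [trinomialCoeff_def, triP, pow_zero, pow_one]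
    simp [coeff_one, coeff_X]
  | succ e =>
    simp only [trinomialCoeff_def]
    have h := coeff_triP_mul (triP ^ (e + 1)) e
    have e1 : 0 + (e + 1 + 1) = e + 2 := by omega
    have e2 : 1 + (e + 1) = e + 2 := by omega
    have e3 : 0 + (e + 1) = e + 1 := by omega
    rw [e1, e2, e3, pow_succ' triP (e+1), h, triP_symm]
    ring

theorem ospMult_eq_trinomial_diff (n d : ℕ) :
    ospMult n d = trinomialCoeff n d - trinomialCoeff (n + 1) d := by
  induction d generalizing n with
  | zero =>
    cases n with
    | zero => simp [ospMult, trinomialCoeff_def, coeff_one]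
    | succ m => simp [ospMult, trinomialCoeff_def, coeff_one]
  | succ d ih =>
    cases n with
    | zero =>
      rw [ospMult, ih 1, tri_rec0 d, tri_rec 0 d]
      ring
    | succ m =>
      rw [ospMult, ih (m + 2), ih (m + 1), ih m, tri_rec m d, tri_rec (m + 1) d]
      ring
end

section
/- For natural numbers n ≤ d, the alternating sum ∑_{i=n}^{d} (-1)^{i+n} · C(d,i) · C(i, ⌊(i-n)/2⌋) equals T(n,d) - T(n+1,d), where T(k,d) is the coefficient of x^{k+d} in (1+x+x^2)^d. -/
open Polynomial
open Finset

lemma coeff_pow_one_add_X_sq (j m : ℕ) :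
    (((1:ℤ[X]) + X^2)^j).coeff m = if 2 ∣ m then (j.choose (m/2) : ℤ) else 0 := by
  rw [add_comm, add_pow]
  simp only [one_pow, mul_one, one_mul, ← pow_mul, ← C_eq_natCast, finset_sum_coeff,
    mul_comm (X ^ _ : ℤ[X]), coeff_C_mul, coeff_X_pow, mul_ite, mul_one, mul_zero]
  by_cases hm : 2 ∣ m
  · obtain ⟨t, rfl⟩ := hm
    rw [if_pos (dvd_mul_right 2 t), Nat.mul_div_cancel_left _ (by norm_num)]
    have h2 : ∀ k, (2 * t = 2 * k) = (t = k) := fun k => by rw [eq_iff_iff]; omega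
    simp only [h2]
    rw [Finset.sum_ite_eq (range (j+1)) t (fun k => (j.choose k : ℤ))]
    by_cases ht : t ∈ range (j+1)
    · simp [ht]
    · simp only [if_neg ht]
      rw [Nat.choose_eq_zero_of_lt (by simpa using ht), Nat.cast_zero]
  · rw [if_neg hm]
    apply Finset.sum_eq_zero
    intro k _
    rw [if_neg]
    rintro rfl
    exact hm (dvd_mul_right 2 k)

lemma bracket_eq (n k : ℕ) :
    (((1:ℤ[X]) + X^2)^k).coeff (n + k) - (((1:ℤ[X]) + X^2)^k).coeff (n + k + 1) =
      if n ≤ k then (-1:ℤ) ^ (k + n) * (k.choose ((k - n) / 2)) else 0 := by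
  rw [coeff_pow_one_add_X_sq, coeff_pow_one_add_X_sq]
  by_cases hp : 2 ∣ n + k
  · obtain ⟨s, hs⟩ := hp
    rw [if_pos ⟨s, hs⟩, if_neg (by omega), sub_zero, hs, Nat.mul_div_cancel_left _ (by norm_num)]
    by_cases hnk : n ≤ k
    · rw [if_pos hnk]
      have h1 : (-1:ℤ) ^ (k + n) = 1 := Even.neg_one_pow ⟨s, by omega⟩
      rw [h1, one_mul]
      have h2 : s ≤ k := by omega
      rw [← Nat.choose_symm h2]
      have h3 : k - s = (k - n) / 2 := by omega
      rw [h3]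
    · rw [if_neg hnk, Nat.choose_eq_zero_of_lt (by omega), Nat.cast_zero]
  · rw [if_neg hp, if_pos (by omega), zero_sub]
    obtain ⟨s, hs⟩ : 2 ∣ n + k + 1 := by omega
    rw [hs, Nat.mul_div_cancel_left _ (by norm_num)]
    by_cases hnk : n ≤ k
    · rw [if_pos hnk]
      have h1 : (-1:ℤ) ^ (k + n) = -1 := Odd.neg_one_pow ⟨s - 1, by omega⟩
      rw [h1]
      have h2 : s ≤ k := by omega
      rw [← Nat.choose_symm h2]
      have : k - s = (k - n) / 2 := by omega
      rw [this]; ring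
    · rw [if_neg hnk, Nat.choose_eq_zero_of_lt (by omega), Nat.cast_zero, neg_zero]

/-- For `n ≤ d`, the alternating sum `∑_{i=n}^{d} (-1)^{i+n} C(d,i) C(i,⌊(i-n)/2⌋)`
equals `T(n,d) - T(n+1,d)`, where `T(k,d)` is the coefficient of `x^(k+d)` in `(1+x+x^2)^d`. -/
theorem alternating_sum_eq_trinomial_diff (n d : ℕ) (h : n ≤ d) :
    ∑ i ∈ Finset.Icc n d,
        (-1 : ℤ) ^ (i + n) * (d.choose i) * (i.choose ((i - n) / 2)) =
      (((1 : Polynomial ℤ) + X + X ^ 2) ^ d).coeff (n + d) -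
        (((1 : Polynomial ℤ) + X + X ^ 2) ^ d).coeff (n + 1 + d) := by
  have key : ∀ m : ℕ, d ≤ m → (((1:ℤ[X]) + X + X^2)^d).coeff m =
      ∑ k ∈ range (d+1), (d.choose k : ℤ) * (((1:ℤ[X]) + X^2)^(d-k)).coeff (m - k) := by
    intro m hm
    have hb : (1:ℤ[X]) + X + X^2 = X + (1+X^2) := by ring
    rw [hb, add_pow, finset_sum_coeff]
    apply Finset.sum_congr rfl
    intro k hk
    have hk' : k ≤ m := le_trans (Nat.lt_succ_iff.mp (mem_range.mp hk)) hm
    have hrw : X ^ k * ((1:ℤ[X])+X^2)^(d-k) * (d.choose k : ℤ[X]) =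
        (C (d.choose k : ℤ)) * ((1+X^2)^(d-k)) * X^k := by
      rw [C_eq_natCast]; ring
    rw [hrw, coeff_mul_X_pow', if_pos hk', coeff_C_mul]
  rw [key (n+d) (by omega), key (n+1+d) (by omega), ← Finset.sum_sub_distrib]
  have step : ∀ k ∈ range (d+1),
      (d.choose k : ℤ) * (((1:ℤ[X]) + X^2)^(d-k)).coeff (n+d-k) -
      (d.choose k : ℤ) * (((1:ℤ[X]) + X^2)^(d-k)).coeff (n+1+d-k) =
      (d.choose k : ℤ) *
        (if n ≤ d-k then (-1:ℤ) ^ ((d-k) + n) * ((d-k).choose (((d-k) - n) / 2)) else 0) := by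
    intro k hk
    have hkd : k ≤ d := Nat.lt_succ_iff.mp (mem_range.mp hk)
    rw [← mul_sub, ← bracket_eq]
    have e1 : n + d - k = n + (d - k) := by omega
    have e2 : n + 1 + d - k = n + (d - k) + 1 := by omega
    rw [e1, e2]
  rw [Finset.sum_congr rfl step]
  have step2 : ∀ k ∈ range (d+1),
      (d.choose k : ℤ) *
        (if n ≤ d-k then (-1:ℤ) ^ ((d-k) + n) * ((d-k).choose (((d-k) - n) / 2)) else 0) =
      (d.choose (d - (d+1-1-k)) : ℤ) *
        (if n ≤ (d+1-1-k) then (-1:ℤ) ^ ((d+1-1-k) + n) *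
          (((d+1-1-k)).choose (((d+1-1-k) - n) / 2)) else 0) := by
    intro k hk
    have hkd : k ≤ d := Nat.lt_succ_iff.mp (mem_range.mp hk)
    have e1 : d + 1 - 1 - k = d - k := by omega
    have e2 : d - (d - k) = k := by omega
    rw [e1, e2]
  rw [Finset.sum_congr rfl step2]
  rw [Finset.sum_range_reflect (fun k => (d.choose (d-k) : ℤ) *
        (if n ≤ k then (-1:ℤ) ^ (k + n) * ((k).choose ((k - n) / 2)) else 0)) (d+1)]
  have hsub : Finset.Icc n d ⊆ Finset.range (d+1) := fun x hx => by
    simp only [Finset.mem_Icc] at hx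
    exact Finset.mem_range.mpr (by omega)
  have hzero : ∀ k ∈ range (d+1), k ∉ Finset.Icc n d →
      (d.choose (d-k) : ℤ) *
        (if n ≤ k then (-1:ℤ) ^ (k + n) * ((k).choose ((k - n) / 2)) else 0) = 0 := by
    intro k hk hk'
    have hkd : k < d + 1 := mem_range.mp hk
    have hkn : k < n := by
      simp only [Finset.mem_Icc, not_and, not_le] at hk'
      omega
    rw [if_neg (by omega), mul_zero]
  rw [← Finset.sum_subset hsub hzero]
  apply Finset.sum_congr rfl
  intro k hk
  obtain ⟨h1, h2⟩ := Finset.mem_Icc.mp hk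
  rw [if_pos h1, Nat.choose_symm h2]
  ring
end

section
/- Let λ and μ be admissible weight diagrams in the same block. Then λ ≤ μ in the Bruhat order generated by type A moves (replacing a neighboured pair ∨∧ by ∧∨) and type D moves (replacing an initial neighboured pair ∧∧ by ∨∨) if and only if l_i(λ,μ) ≥ 0 for all i ≥ 0, where l_i(λ,μ) is defined as follows: if μ has m symbols ∧ and λ has m+2k symbols ∧, set l_0(λ,μ)=2k, and for i > 0 set l_i(λ,μ)=0 if λ(i)∈{×,∘}, and otherwise l_i(λ,μ) = 2k + #{j ≤ i : λ(j)=∨} − #{j ≤ i : μ(j)=∨}. -/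
/-- The symbols `×, ∘, ∨, ∧, ◇` of a weight diagram. -/
inductive Symb : Type
  | x | o | dn | up | dia
  deriving DecidableEq

/-- A weight diagram: a labelling of the vertices of the nonnegative (half-)integer line
(enumerated by `ℕ`) by symbols. -/
abbrev WD := ℕ → Symb

/-- The diamond `◇` can only occur at the leftmost vertex. -/
def DiaOnlyZero (w : WD) : Prop := ∀ n, w n = Symb.dia → n = 0

/-- Position `0` may only carry `∘` or `◇`. -/
def ZeroConstraint (w : WD) : Prop := w 0 = Symb.o ∨ w 0 = Symb.dia

/-- A weight diagram is admissible if it has only finitely many symbols `∘`, `×`, `∧`. -/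
def Admissible (w : WD) : Prop :=
  {n : ℕ | w n = Symb.o ∨ w n = Symb.x ∨ w n = Symb.up}.Finite

/-- Two positions are neighboured if they are separated only by `∘`'s and `×`'s. -/
def Neigh (w : WD) (i j : ℕ) : Prop :=
  i < j ∧ ∀ k, i < k → k < j → w k = Symb.o ∨ w k = Symb.x

/-- A type A Bruhat move: a neighboured pair `∨∧` is replaced by `∧∨`
(a `◇` may be read as `∨`, in which case the diamond is kept and the `∧` becomes `∨`). -/
def TypeAMove (w w' : WD) : Prop :=
  ∃ i j, Neigh w i j ∧ (∀ k, k ≠ i → k ≠ j → w' k = w k) ∧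
    w j = Symb.up ∧ w' j = Symb.dn ∧
    ((w i = Symb.dn ∧ w' i = Symb.up) ∨ (w i = Symb.dia ∧ w' i = Symb.dia))

/-- A type D Bruhat move: an initial neighboured pair `∧∧` is replaced by `∨∨`. -/
def TypeDMove (w w' : WD) : Prop :=
  ∃ i j, Neigh w i j ∧ (∀ k, k < i → w k = Symb.o ∨ w k = Symb.x) ∧
    (∀ k, k ≠ i → k ≠ j → w' k = w k) ∧
    w i = Symb.up ∧ w j = Symb.up ∧ w' i = Symb.dn ∧ w' j = Symb.dn

/-- A Bruhat move is a type A or a type D move. -/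
def BruhatMove (w w' : WD) : Prop := TypeAMove w w' ∨ TypeDMove w w'

/-- The Bruhat order: `λ ≤ μ` iff `μ` is obtained from `λ` by a finite sequence of
Bruhat moves. -/
def BruhatLE : WD → WD → Prop := Relation.ReflTransGen BruhatMove

/-- The number of `∧`'s of a weight diagram. -/
noncomputable def upCount (w : WD) : ℕ := Nat.card {n : ℕ | w n = Symb.up}

/-- The number of `∨`'s of `w` at positions `≤ i`. -/
def dnUpTo (w : WD) (i : ℕ) : ℕ :=
  ((Finset.range (i + 1)).filter fun j => w j = Symb.dn).card

/-- The statistics `l_i(λ,μ)`: `l_0(λ,μ) = 2k` where `λ` has `2k` more `∧`'s than `μ`;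
for `i > 0`, `l_i(λ,μ) = 0` if `λ(i) ∈ {×,∘}`, and otherwise
`l_i(λ,μ) = 2k + #{j ≤ i : λ(j) = ∨} - #{j ≤ i : μ(j) = ∨}`. -/
noncomputable def lstat (lam mu : WD) : ℕ → ℤ
  | 0 => (upCount lam : ℤ) - (upCount mu : ℤ)
  | i + 1 =>
    if lam (i + 1) = Symb.o ∨ lam (i + 1) = Symb.x then 0
    else (upCount lam : ℤ) - (upCount mu : ℤ)
      + (dnUpTo lam (i + 1) : ℤ) - (dnUpTo mu (i + 1) : ℤ)

/-- Two weight diagrams belong to the same block: the positions of `∘`'s and `×`'s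
(and of the diamond) agree, and either the numbers of `∧`'s are congruent mod `2`
or both diagrams start with `◇`. -/
def SameBlock (lam mu : WD) : Prop :=
  (∀ n, lam n = Symb.o ↔ mu n = Symb.o) ∧
  (∀ n, lam n = Symb.x ↔ mu n = Symb.x) ∧
  (lam 0 = Symb.dia ↔ mu 0 = Symb.dia) ∧
  (upCount lam % 2 = upCount mu % 2 ∨ (lam 0 = Symb.dia ∧ mu 0 = Symb.dia))

/-!
Write `upsFrom w n` for the number of `∧`'s of `w` at positions `≥ n`. Since `λ` and `μ` carry
`∘`, `×` and `◇` at the same places, `l_i(λ,μ)` is `upsFrom λ (i+1) - upsFrom μ (i+1)` at every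
`∨`/`∧` position `i > 0` (and `upsFrom λ 0 - upsFrom μ 0` at `i = 0`), and this difference does not
change across `∘`'s and `×`'s; so the condition says exactly that `upsFrom μ ≤ upsFrom λ`.

Every Bruhat move strictly lowers `upsFrom`, which gives one direction. Conversely, if
`upsFrom μ ≤ upsFrom λ` and `λ ≠ μ`, some move from `λ` keeps `upsFrom` above `upsFrom μ`. Usually
this is a type A move into the first `∧` to the right of a `∨` or `◇` behind which the excess
`upsFrom λ - upsFrom μ` is positive; the exception is an excess present from the very left with `λ`
starting with `∧∧`, where a type D move works because the parity condition of the block makes that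
excess at least `2`.
Induction on `∑ n < N, upsFrom λ n` concludes.
-/

open Function

structure IsAdmissibleDiagram (w : WD) : Prop where
  diaOnlyZero : DiaOnlyZero w
  zeroConstraint : ZeroConstraint w
  admissible : Admissible w

lemma Set.ncard_eq_ncard_sdiff_singleton_add {α : Type*} {s : Set α} (hs : s.Finite) (a : α)
    [Decidable (a ∈ s)] : s.ncard = (s \ {a}).ncard + if a ∈ s then 1 else 0 := by
  split_ifs with h
  · exact (Set.ncard_sdiff_singleton_add_one h hs).symm
  · rw [Set.sdiff_singleton_eq_self h, add_zero]

section UpsFrom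

variable {w : WD}

noncomputable def upsFrom (w : WD) (n : ℕ) : ℕ := {k | n ≤ k ∧ w k = Symb.up}.ncard

lemma Admissible.finite_upsFrom (hw : Admissible w) (n : ℕ) :
    {k | n ≤ k ∧ w k = Symb.up}.Finite :=
  hw.subset fun _ hk => Or.inr (Or.inr hk.2)

lemma Admissible.update (hw : Admissible w) (a : ℕ) (s : Symb) : Admissible (update w a s) := by
  refine (hw.insert a).subset fun k hk => ?_
  by_cases h : k = a
  · exact Or.inl h
  · exact Or.inr (by simpa [update_of_ne h] using hk)

lemma upCount_eq_upsFrom_zero (w : WD) : upCount w = upsFrom w 0 := by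
  simp [upCount, upsFrom]

lemma upsFrom_eq_upsFrom_succ_add (hw : Admissible w) (n : ℕ) :
    upsFrom w n = upsFrom w (n + 1) + if w n = Symb.up then 1 else 0 := by
  have hdiff : {k | n ≤ k ∧ w k = Symb.up} \ {n} = {k | n + 1 ≤ k ∧ w k = Symb.up} := by
    ext k
    simp only [Set.mem_sdiff, Set.mem_ofPred_eq, Set.mem_singleton_iff]
    constructor
    · rintro ⟨⟨hnk, hk⟩, hkn⟩
      exact ⟨by omega, hk⟩
    · rintro ⟨hnk, hk⟩
      exact ⟨⟨by omega, hk⟩, by omega⟩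
  rw [upsFrom, Set.ncard_eq_ncard_sdiff_singleton_add (hw.finite_upsFrom n) n, hdiff]
  simp [upsFrom]

lemma upsFrom_update (hw : Admissible w) (a n : ℕ) (s : Symb) :
    upsFrom (update w a s) n + (if n ≤ a ∧ w a = Symb.up then 1 else 0)
      = upsFrom w n + if n ≤ a ∧ s = Symb.up then 1 else 0 := by
  have hdiff : {k | n ≤ k ∧ update w a s k = Symb.up} \ {a}
      = {k | n ≤ k ∧ w k = Symb.up} \ {a} := by
    ext k
    by_cases h : k = a <;> simp [h, update_of_ne]
  rw [upsFrom, upsFrom, Set.ncard_eq_ncard_sdiff_singleton_add ((hw.update a s).finite_upsFrom n) a,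
    Set.ncard_eq_ncard_sdiff_singleton_add (hw.finite_upsFrom n) a, hdiff]
  simp only [Set.mem_ofPred_eq, update_self]
  omega

lemma upsFrom_succ_of_ne_up (hw : Admissible w) {n : ℕ} (h : w n ≠ Symb.up) :
    upsFrom w (n + 1) = upsFrom w n := by
  rw [upsFrom_eq_upsFrom_succ_add hw n, if_neg h, add_zero]

lemma upsFrom_succ_of_eq_up (hw : Admissible w) {n : ℕ} (h : w n = Symb.up) :
    upsFrom w (n + 1) + 1 = upsFrom w n := by
  rw [upsFrom_eq_upsFrom_succ_add hw n, if_pos h]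

lemma upsFrom_antitone (hw : Admissible w) : Antitone (upsFrom w) :=
  antitone_nat_of_succ_le fun n => by rw [upsFrom_eq_upsFrom_succ_add hw n]; omega

lemma upsFrom_eq_of_forall_ne_up (hw : Admissible w) {n m : ℕ} (hnm : n ≤ m)
    (h : ∀ k, n ≤ k → k < m → w k ≠ Symb.up) : upsFrom w n = upsFrom w m := by
  induction m, hnm using Nat.le_induction with
  | base => rfl
  | succ m hnm ih =>
    rw [ih fun k hk hkm => h k hk (by omega), upsFrom_succ_of_ne_up hw (h m hnm (by omega))]

lemma exists_up_of_upsFrom_ne_zero {n : ℕ} (h : upsFrom w n ≠ 0) :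
    ∃ k, n ≤ k ∧ w k = Symb.up :=
  Set.nonempty_of_ncard_ne_zero h

lemma Admissible.exists_upsFrom_eq_zero (hw : Admissible w) : ∃ N, upsFrom w N = 0 := by
  obtain ⟨M, hM⟩ := (hw.finite_upsFrom 0).bddAbove
  have hempty : {k | M + 1 ≤ k ∧ w k = Symb.up} = ∅ :=
    Set.eq_empty_of_forall_notMem fun k hk => absurd (hM ⟨Nat.zero_le k, hk.2⟩) (Nat.not_le.2 hk.1)
  exact ⟨M + 1, by rw [upsFrom, hempty, Set.ncard_empty]⟩

lemma upCount_eq_card_filter_add_upsFrom (hw : Admissible w) (n : ℕ) :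
    upCount w = ((Finset.range n).filter fun k => w k = Symb.up).card + upsFrom w n := by
  induction n with
  | zero => simp [upCount_eq_upsFrom_zero]
  | succ n ih =>
    rw [ih, upsFrom_eq_upsFrom_succ_add hw n, Finset.range_add_one, Finset.filter_insert]
    split_ifs with h <;> simp [h, Finset.card_insert_of_notMem]; omega

end UpsFrom

section SameBlock

variable {lam mu : WD}

lemma SameBlock.arrow_iff (hb : SameBlock lam mu) (hl0 : DiaOnlyZero lam) (hm0 : DiaOnlyZero mu)
    (k : ℕ) : (lam k = Symb.up ∨ lam k = Symb.dn) ↔ (mu k = Symb.up ∨ mu k = Symb.dn) := by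
  have hdia : lam k = Symb.dia ↔ mu k = Symb.dia := by
    rcases eq_or_ne k 0 with rfl | hk
    · exact hb.2.2.1
    · exact ⟨fun h => absurd (hl0 k h) hk, fun h => absurd (hm0 k h) hk⟩
  have ho := hb.1 k
  have hx := hb.2.1 k
  cases hl : lam k <;> cases hm : mu k <;> simp_all

lemma SameBlock.trans {w₁ w₂ w₃ : WD} (h₁₂ : SameBlock w₁ w₂) (h₂₃ : SameBlock w₂ w₃) :
    SameBlock w₁ w₃ := by
  refine ⟨fun n => (h₁₂.1 n).trans (h₂₃.1 n), fun n => (h₁₂.2.1 n).trans (h₂₃.2.1 n),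
    h₁₂.2.2.1.trans h₂₃.2.2.1, ?_⟩
  rcases h₁₂.2.2.2 with hp | ⟨hd₁, hd₂⟩
  · rcases h₂₃.2.2.2 with hq | ⟨hd₂, hd₃⟩
    · exact Or.inl (hp.trans hq)
    · exact Or.inr ⟨h₁₂.2.2.1.2 hd₂, hd₃⟩
  · exact Or.inr ⟨hd₁, h₂₃.2.2.1.1 hd₂⟩

lemma card_filter_up_add_card_filter_dn_eq
    (h : ∀ k, (lam k = Symb.up ∨ lam k = Symb.dn) ↔ (mu k = Symb.up ∨ mu k = Symb.dn))
    (s : Finset ℕ) :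
    (s.filter (lam · = Symb.up)).card + (s.filter (lam · = Symb.dn)).card
      = (s.filter (mu · = Symb.up)).card + (s.filter (mu · = Symb.dn)).card := by
  simp only [Finset.card_filter, ← Finset.sum_add_distrib]
  refine Finset.sum_congr rfl fun k _ => ?_
  have := h k
  revert this
  cases lam k <;> cases mu k <;> simp

lemma lstat_succ (hb : SameBlock lam mu) (hl0 : DiaOnlyZero lam) (hm0 : DiaOnlyZero mu)
    (hla : Admissible lam) (hma : Admissible mu) (q : ℕ) :
    lstat lam mu (q + 1) = if lam (q + 1) = Symb.o ∨ lam (q + 1) = Symb.x then 0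
      else (upsFrom lam (q + 2) : ℤ) - upsFrom mu (q + 2) := by
  have hcard := card_filter_up_add_card_filter_dn_eq (hb.arrow_iff hl0 hm0) (Finset.range (q + 2))
  rw [lstat, dnUpTo, dnUpTo, show q + 1 + 1 = q + 2 from rfl,
    upCount_eq_card_filter_add_upsFrom hla (q + 2), upCount_eq_card_filter_add_upsFrom hma (q + 2)]
  split_ifs
  · rfl
  · omega

lemma lstat_nonneg_iff (hb : SameBlock lam mu) (hl0 : DiaOnlyZero lam) (hm0 : DiaOnlyZero mu)
    (hlz : ZeroConstraint lam) (hla : Admissible lam) (hma : Admissible mu) :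
    (∀ i, 0 ≤ lstat lam mu i) ↔ upsFrom mu ≤ upsFrom lam := by
  rw [Pi.le_def]
  constructor
  · intro h n
    induction n with
    | zero =>
      have := h 0
      rw [lstat, upCount_eq_upsFrom_zero, upCount_eq_upsFrom_zero] at this
      omega
    | succ n ih =>
      by_cases harrow : lam n = Symb.up ∨ lam n = Symb.dn
      · obtain ⟨q, rfl⟩ : ∃ q, n = q + 1 := Nat.exists_eq_succ_of_ne_zero <| by
          rintro rfl
          rcases hlz with h0 | h0 <;> rcases harrow with h1 | h1 <;> simp_all
        have := h (q + 1)
        rw [lstat_succ hb hl0 hm0 hla hma, if_neg (by rcases harrow with h1 | h1 <;> simp [h1])]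
          at this
        exact Int.ofNat_le.1 (sub_nonneg.1 this)
      · have hmu := (hb.arrow_iff hl0 hm0 n).not.1 harrow
        rw [not_or] at harrow hmu
        rwa [upsFrom_succ_of_ne_up hla harrow.1, upsFrom_succ_of_ne_up hma hmu.1]
  · intro h i
    rcases i with _ | q
    · rw [lstat, upCount_eq_upsFrom_zero, upCount_eq_upsFrom_zero]
      exact sub_nonneg.2 (by exact_mod_cast h 0)
    · rw [lstat_succ hb hl0 hm0 hla hma]
      split_ifs
      · rfl
      · exact sub_nonneg.2 (by exact_mod_cast h (q + 2))

end SameBlock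

section Moves

variable {w w' : WD}

lemma upsFrom_update_update_dn (hw : Admissible w) {i j : ℕ} (hij : i < j) (hj : w j = Symb.up)
    (s : Symb) (n : ℕ) :
    upsFrom (update (update w i s) j Symb.dn) n + (if n ≤ j then 1 else 0)
        + (if n ≤ i ∧ w i = Symb.up then 1 else 0)
      = upsFrom w n + if n ≤ i ∧ s = Symb.up then 1 else 0 := by
  have h₁ := upsFrom_update (hw.update i s) j n Symb.dn
  have h₂ := upsFrom_update hw i n s
  rw [update_of_ne hij.ne', hj] at h₁
  simp only [and_true, reduceCtorEq, and_false, if_false, add_zero] at h₁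
  omega

lemma eq_update_update_of_eq_of_ne {i j : ℕ} (hij : i ≠ j)
    (h : ∀ k, k ≠ i → k ≠ j → w' k = w k) : w' = update (update w i (w' i)) j (w' j) := by
  funext k
  by_cases hkj : k = j
  · subst hkj; rw [update_self]
  · by_cases hki : k = i
    · subst hki; rw [update_of_ne hkj, update_self]
    · rw [update_of_ne hkj, update_of_ne hki, h k hki hkj]

lemma BruhatMove.exists_eq_update (h : BruhatMove w w') :
    ∃ i j s, i < j ∧ w j = Symb.up ∧
      (w i = Symb.dn ∧ s = Symb.up ∨ w i = Symb.dia ∧ s = Symb.dia ∨ w i = Symb.up ∧ s = Symb.dn) ∧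
      w' = update (update w i s) j Symb.dn := by
  rcases h with ⟨i, j, ⟨hij, -⟩, hoff, hj, hj', hi⟩ | ⟨i, j, ⟨hij, -⟩, -, hoff, hi, hj, hi', hj'⟩
  · refine ⟨i, j, w' i, hij, hj, ?_, hj' ▸ eq_update_update_of_eq_of_ne hij.ne hoff⟩
    rcases hi with ⟨hi, hi'⟩ | ⟨hi, hi'⟩
    · exact Or.inl ⟨hi, hi'⟩
    · exact Or.inr (Or.inl ⟨hi, hi'⟩)
  · exact ⟨i, j, w' i, hij, hj, Or.inr (Or.inr ⟨hi, hi'⟩),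
      hj' ▸ eq_update_update_of_eq_of_ne hij.ne hoff⟩

lemma BruhatMove.eq_or_arrow (h : BruhatMove w w') (k : ℕ) :
    w' k = w k ∨ (w k = Symb.up ∨ w k = Symb.dn) ∧ (w' k = Symb.up ∨ w' k = Symb.dn) := by
  obtain ⟨i, j, s, hij, hj, hs, rfl⟩ := h.exists_eq_update
  by_cases hkj : k = j
  · subst hkj; simp [hj]
  · by_cases hki : k = i
    · subst hki
      rw [update_of_ne hkj, update_self]
      rcases hs with ⟨hk, rfl⟩ | ⟨hk, rfl⟩ | ⟨hk, rfl⟩ <;> simp [hk]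
    · left; rw [update_of_ne hkj, update_of_ne hki]

lemma BruhatMove.isAdmissibleDiagram (h : BruhatMove w w') (hw : IsAdmissibleDiagram w) :
    IsAdmissibleDiagram w' := by
  refine ⟨fun k hk => ?_, ?_, ?_⟩
  · rcases h.eq_or_arrow k with hk' | ⟨-, hk'⟩
    · exact hw.diaOnlyZero k (hk' ▸ hk)
    · rw [hk] at hk'; simp at hk'
  · rcases h.eq_or_arrow 0 with h0 | ⟨h0, -⟩
    · unfold ZeroConstraint; rw [h0]; exact hw.zeroConstraint
    · rcases hw.zeroConstraint with hz | hz <;> rw [hz] at h0 <;> simp at h0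
  · obtain ⟨i, j, s, -, -, -, rfl⟩ := h.exists_eq_update
    exact (hw.admissible.update i s).update j Symb.dn

lemma BruhatMove.upsFrom_lt (h : BruhatMove w w') (hw : Admissible w) :
    upsFrom w' < upsFrom w := by
  obtain ⟨i, j, s, hij, hj, -, rfl⟩ := h.exists_eq_update
  have key := upsFrom_update_update_dn hw hij hj s
  refine Pi.lt_def.2 ⟨fun n => ?_, j, ?_⟩
  · have := key n
    change upsFrom _ n ≤ upsFrom w n
    split_ifs at this <;> omega
  · have := key j
    change upsFrom _ j < upsFrom w j
    simp only [le_refl, if_true, hij.not_ge, false_and, if_false] at this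
    omega

lemma BruhatMove.sameBlock (h : BruhatMove w w') (hw : IsAdmissibleDiagram w) :
    SameBlock w' w := by
  have hsym : ∀ c, c ≠ Symb.up → c ≠ Symb.dn → ∀ n, (w' n = c ↔ w n = c) := by
    intro c hcu hcd n
    rcases h.eq_or_arrow n with hn | ⟨hn, hn'⟩
    · rw [hn]
    · constructor <;> intro hc <;> simp_all
  refine ⟨hsym _ (by simp) (by simp), hsym _ (by simp) (by simp), hsym _ (by simp) (by simp) 0, ?_⟩
  obtain ⟨i, j, s, hij, hj, hs, rfl⟩ := h.exists_eq_update
  have key := upsFrom_update_update_dn hw.admissible hij hj s 0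
  simp only [zero_le, true_and, if_true] at key
  rw [upCount_eq_upsFrom_zero, upCount_eq_upsFrom_zero]
  rcases hs with ⟨hi, rfl⟩ | ⟨hi, rfl⟩ | ⟨hi, rfl⟩
  · simp only [hi, reduceCtorEq, if_false, if_true] at key
    left; omega
  · obtain rfl := hw.diaOnlyZero i hi
    right
    simp [hi, update_of_ne hij.ne]
  · simp only [hi, reduceCtorEq, if_false, if_true] at key
    left; omega

end Moves

lemma upsFrom_le_of_bruhatLE {lam mu : WD} (h : BruhatLE lam mu) (hl : IsAdmissibleDiagram lam) :
    upsFrom mu ≤ upsFrom lam := by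
  induction h using Relation.ReflTransGen.head_induction_on with
  | refl => exact le_rfl
  | head hmove _ ih =>
    exact (ih (hmove.isAdmissibleDiagram hl)).trans (hmove.upsFrom_lt hl.admissible).le

section Neighbours

variable {w : WD}

lemma Admissible.exists_not_ox_gt (hw : Admissible w) (i : ℕ) :
    ∃ j, i < j ∧ ¬(w j = Symb.o ∨ w j = Symb.x) := by
  obtain ⟨M, hM⟩ := hw.bddAbove
  refine ⟨max i M + 1, by omega, fun h => ?_⟩
  have := hM (show max i M + 1 ∈ _ from h.elim Or.inl fun h => Or.inr (Or.inl h))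
  omega

lemma Admissible.exists_neigh (hw : Admissible w) (i : ℕ) :
    ∃ j, Neigh w i j ∧ ¬(w j = Symb.o ∨ w j = Symb.x) := by
  classical
  have hex := hw.exists_not_ox_gt i
  obtain ⟨hij, hj⟩ := Nat.find_spec hex
  refine ⟨Nat.find hex, ⟨hij, fun k hik hkj => ?_⟩, hj⟩
  by_contra hk
  exact Nat.find_min hex hkj ⟨hik, hk⟩

lemma Admissible.exists_first_not_ox (hw : Admissible w) :
    ∃ j, (∀ k, k < j → w k = Symb.o ∨ w k = Symb.x) ∧ ¬(w j = Symb.o ∨ w j = Symb.x) := by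
  classical
  have hex : ∃ j, ¬(w j = Symb.o ∨ w j = Symb.x) := (hw.exists_not_ox_gt 0).imp fun _ h => h.2
  exact ⟨Nat.find hex, fun k hk => not_not.1 (Nat.find_min hex hk), Nat.find_spec hex⟩

lemma exists_neigh_of_lt {k j : ℕ} (hkj : k < j) (hk : ¬(w k = Symb.o ∨ w k = Symb.x)) :
    ∃ i, k ≤ i ∧ Neigh w i j ∧ ¬(w i = Symb.o ∨ w i = Symb.x) := by
  classical
  set P := fun i => ¬(w i = Symb.o ∨ w i = Symb.x)
  have hle := Nat.findGreatest_le (P := P) (j - 1)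
  refine ⟨Nat.findGreatest P (j - 1), Nat.le_findGreatest (by omega) hk,
    ⟨by omega, fun l hil hlj => ?_⟩, Nat.findGreatest_spec (P := P) (by omega : k ≤ j - 1) hk⟩
  exact not_not.1 (Nat.findGreatest_is_greatest hil (by omega))

lemma Neigh.not_arrow {i j k : ℕ} (h : Neigh w i j) (hik : i < k) (hkj : k < j) :
    ¬(w k = Symb.up ∨ w k = Symb.dn) := by
  rcases h.2 k hik hkj with h | h <;> simp [h]

lemma Neigh.upsFrom_eq (hw : Admissible w) {i j n : ℕ} (h : Neigh w i j) (hin : i < n)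
    (hnj : n ≤ j) : upsFrom w n = upsFrom w j :=
  upsFrom_eq_of_forall_ne_up hw hnj fun _ hnk hkj hk =>
    h.not_arrow (hin.trans_le hnk) hkj (Or.inl hk)

end Neighbours

section Search

lemma Symb.dn_or_dia_or_up {s : Symb} (h : ¬(s = Symb.o ∨ s = Symb.x)) :
    (s = Symb.dn ∨ s = Symb.dia) ∨ s = Symb.up := by
  cases s <;> simp_all

variable {lam mu : WD}

lemma upsFrom_lt_of_forall_not_arrow (hl : IsAdmissibleDiagram lam) (hm0 : DiaOnlyZero mu)
    (hma : Admissible mu) (hb : SameBlock lam mu) {n j : ℕ} (hnj : n ≤ j)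
    (hgap : ∀ k, n ≤ k → k < j → ¬(lam k = Symb.up ∨ lam k = Symb.dn))
    (hD : upsFrom mu j < upsFrom lam j) : upsFrom mu n < upsFrom lam n := by
  rw [upsFrom_eq_of_forall_ne_up hl.admissible hnj fun k hnk hkj h => hgap k hnk hkj (Or.inl h),
    upsFrom_eq_of_forall_ne_up hma hnj fun k hnk hkj h =>
      hgap k hnk hkj ((hb.arrow_iff hl.diaOnlyZero hm0 k).2 (Or.inl h))]
  exact hD

lemma exists_typeAMove (hl : IsAdmissibleDiagram lam) (hm0 : DiaOnlyZero mu)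
    (hma : Admissible mu) (hb : SameBlock lam mu) (hdom : upsFrom mu ≤ upsFrom lam)
    {i j : ℕ} (hij : Neigh lam i j) (hi : lam i = Symb.dn ∨ lam i = Symb.dia)
    (hj : lam j = Symb.up) (hD : upsFrom mu j < upsFrom lam j) :
    ∃ lam', BruhatMove lam lam' ∧ upsFrom mu ≤ upsFrom lam' := by
  have hoff : ∀ s, ∀ k, k ≠ i → k ≠ j → update (update lam i s) j Symb.dn k = lam k :=
    fun s k hki hkj => by rw [update_of_ne hkj, update_of_ne hki]
  have hi' : ∀ s, update (update lam i s) j Symb.dn i = s := fun s => by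
    rw [update_of_ne hij.1.ne, update_self]
  rcases hi with hi | hi
  · refine ⟨_, Or.inl ⟨i, j, hij, hoff Symb.up, hj, update_self .., Or.inl ⟨hi, hi' _⟩⟩,
      fun n => ?_⟩
    have key := upsFrom_update_update_dn hl.admissible hij.1 hj Symb.up n
    simp only [hi, reduceCtorEq, and_false, if_false, add_zero, and_true] at key
    have hdn : upsFrom mu n ≤ upsFrom lam n := hdom n
    change upsFrom mu n ≤ upsFrom _ n
    by_cases hni : n ≤ i
    · rw [if_pos hni, if_pos (hni.trans hij.1.le)] at key
      omega
    rw [if_neg hni] at key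
    by_cases hnj : n ≤ j
    · have := upsFrom_lt_of_forall_not_arrow hl hm0 hma hb hnj
        (fun k hnk hkj => hij.not_arrow (by omega) hkj) hD
      rw [if_pos hnj] at key
      omega
    · rw [if_neg hnj] at key
      omega
  · obtain rfl := hl.diaOnlyZero i hi
    refine ⟨_, Or.inl ⟨0, j, hij, hoff Symb.dia, hj, update_self .., Or.inr ⟨hi, hi' _⟩⟩,
      fun n => ?_⟩
    have key := upsFrom_update_update_dn hl.admissible hij.1 hj Symb.dia n
    simp only [hi, reduceCtorEq, and_false, if_false, add_zero] at key
    have hdn : upsFrom mu n ≤ upsFrom lam n := hdom n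
    change upsFrom mu n ≤ upsFrom _ n
    by_cases hnj : n ≤ j
    · have := upsFrom_lt_of_forall_not_arrow hl hm0 hma hb hnj (fun k _ hkj => by
        rcases Nat.eq_zero_or_pos k with rfl | hk
        · simp [hi]
        · exact hij.not_arrow hk hkj) hD
      rw [if_pos hnj] at key
      omega
    · rw [if_neg hnj] at key
      omega

lemma exists_typeDMove (hl : IsAdmissibleDiagram lam) (hm0 : DiaOnlyZero mu)
    (hma : Admissible mu) (hb : SameBlock lam mu) (hdom : upsFrom mu ≤ upsFrom lam)
    {i j : ℕ} (hpre : ∀ k, k < i → lam k = Symb.o ∨ lam k = Symb.x) (hij : Neigh lam i j)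
    (hi : lam i = Symb.up) (hj : lam j = Symb.up) (hD : upsFrom mu 0 + 2 ≤ upsFrom lam 0) :
    ∃ lam', BruhatMove lam lam' ∧ upsFrom mu ≤ upsFrom lam' := by
  have hprefix : ∀ n, n ≤ i → upsFrom lam 0 = upsFrom lam n := fun n hni =>
    upsFrom_eq_of_forall_ne_up hl.admissible (Nat.zero_le n) fun k _ hkn h => by
      rcases hpre k (by omega) with h' | h' <;> simp [h'] at h
  have hDj : upsFrom mu j < upsFrom lam j := by
    have := upsFrom_succ_of_eq_up hl.admissible hi
    have := hprefix i le_rfl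
    have := hij.upsFrom_eq hl.admissible (n := i + 1) (by omega) hij.1
    have := upsFrom_antitone hma (Nat.zero_le j)
    omega
  refine ⟨update (update lam i Symb.dn) j Symb.dn,
    Or.inr ⟨i, j, hij, hpre, fun k hki hkj => by rw [update_of_ne hkj, update_of_ne hki],
      hi, hj, by rw [update_of_ne hij.1.ne, update_self], update_self ..⟩, fun n => ?_⟩
  have key := upsFrom_update_update_dn hl.admissible hij.1 hj Symb.dn n
  simp only [hi, reduceCtorEq, and_false, if_false, add_zero, and_true] at key
  have hdn : upsFrom mu n ≤ upsFrom lam n := hdom n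
  change upsFrom mu n ≤ upsFrom _ n
  by_cases hni : n ≤ i
  · have := hprefix n hni
    have := upsFrom_antitone hma (Nat.zero_le n)
    rw [if_pos hni, if_pos (hni.trans hij.1.le)] at key
    omega
  rw [if_neg hni] at key
  by_cases hnj : n ≤ j
  · have := upsFrom_lt_of_forall_not_arrow hl hm0 hma hb hnj
      (fun k hnk hkj => hij.not_arrow (by omega) hkj) hDj
    rw [if_pos hnj] at key
    omega
  · rw [if_neg hnj] at key
    omega

lemma exists_bruhatMove_of_dn_or_dia (hl : IsAdmissibleDiagram lam) (hm0 : DiaOnlyZero mu)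
    (hma : Admissible mu) (hb : SameBlock lam mu) (hdom : upsFrom mu ≤ upsFrom lam)
    {i : ℕ} (hi : lam i = Symb.dn ∨ lam i = Symb.dia)
    (hD : upsFrom mu (i + 1) < upsFrom lam (i + 1)) :
    ∃ lam', BruhatMove lam lam' ∧ upsFrom mu ≤ upsFrom lam' := by
  classical
  have hex : ∃ j, i < j ∧ lam j = Symb.up :=
    exists_up_of_upsFrom_ne_zero (w := lam) (n := i + 1) (by omega)
  obtain ⟨hij, hj⟩ := Nat.find_spec hex
  have hnoup : ∀ k, i + 1 ≤ k → k < Nat.find hex → lam k ≠ Symb.up :=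
    fun k hik hkj h => Nat.find_min hex hkj ⟨hik, h⟩
  obtain ⟨i', hii', hN, hi'⟩ :=
    exists_neigh_of_lt (w := lam) hij (by rcases hi with h | h <;> simp [h])
  have hi'' : lam i' = Symb.dn ∨ lam i' = Symb.dia := by
    rcases hii'.eq_or_lt with rfl | hlt
    · exact hi
    · exact (Symb.dn_or_dia_or_up hi').resolve_right (hnoup i' hlt hN.1)
  refine exists_typeAMove hl hm0 hma hb hdom hN hi'' hj ?_
  have := upsFrom_eq_of_forall_ne_up hl.admissible (n := i + 1) hij hnoup
  have := upsFrom_antitone hma (show i + 1 ≤ Nat.find hex from hij)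
  omega

lemma SameBlock.eq_of_upsFrom_eq (hb : SameBlock lam mu) (hl0 : DiaOnlyZero lam)
    (hm0 : DiaOnlyZero mu) (hla : Admissible lam) (hma : Admissible mu)
    (h : upsFrom lam = upsFrom mu) : lam = mu := by
  funext n
  have hup : lam n = Symb.up ↔ mu n = Symb.up := by
    have hl := upsFrom_eq_upsFrom_succ_add hla n
    have hm := upsFrom_eq_upsFrom_succ_add hma n
    rw [h] at hl
    split_ifs at hl hm <;> simp_all
  have harrow := hb.arrow_iff hl0 hm0 n
  have ho := hb.1 n
  have hx := hb.2.1 n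
  cases hl : lam n <;> cases hm : mu n <;> simp_all

lemma exists_bruhatMove_of_upsFrom_zero_lt (hl : IsAdmissibleDiagram lam)
    (hm0 : DiaOnlyZero mu) (hma : Admissible mu) (hb : SameBlock lam mu)
    (hdom : upsFrom mu ≤ upsFrom lam) (hD : upsFrom mu 0 < upsFrom lam 0) :
    ∃ lam', BruhatMove lam lam' ∧ upsFrom mu ≤ upsFrom lam' := by
  obtain ⟨j, hpre, hj⟩ := hl.admissible.exists_first_not_ox
  have hprefix : upsFrom lam 0 = upsFrom lam j :=
    upsFrom_eq_of_forall_ne_up hl.admissible (Nat.zero_le j) fun k _ hkj h => by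
      rcases hpre k hkj with h' | h' <;> simp [h'] at h
  rcases Symb.dn_or_dia_or_up hj with hj' | hj'
  · refine exists_bruhatMove_of_dn_or_dia hl hm0 hma hb hdom hj' ?_
    have := upsFrom_succ_of_ne_up hl.admissible (n := j) (by rcases hj' with h | h <;> simp [h])
    have := upsFrom_antitone hma (Nat.zero_le (j + 1))
    omega
  have hj0 : j ≠ 0 := by
    rintro rfl
    rcases hl.zeroConstraint with h | h <;> rw [h] at hj' <;> simp at hj'
  have hnotdia : lam 0 ≠ Symb.dia := by
    rcases hpre 0 (Nat.pos_of_ne_zero hj0) with h | h <;> simp [h]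
  have hpar := hb.2.2.2.resolve_right fun h => hnotdia h.1
  rw [upCount_eq_upsFrom_zero, upCount_eq_upsFrom_zero] at hpar
  have hD2 : upsFrom mu 0 + 2 ≤ upsFrom lam 0 := by omega
  obtain ⟨k, hjk, hk⟩ := hl.admissible.exists_neigh j
  rcases Symb.dn_or_dia_or_up hk with hk' | hk'
  · refine exists_bruhatMove_of_dn_or_dia hl hm0 hma hb hdom hk' ?_
    have := upsFrom_succ_of_ne_up hl.admissible (n := k) (by rcases hk' with h | h <;> simp [h])
    have := hjk.upsFrom_eq hl.admissible (n := j + 1) (by omega) hjk.1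
    have := upsFrom_succ_of_eq_up hl.admissible hj'
    have := upsFrom_antitone hma (Nat.zero_le (k + 1))
    omega
  · exact exists_typeDMove hl hm0 hma hb hdom hpre hjk hj' hk' hD2

lemma exists_bruhatMove (hl : IsAdmissibleDiagram lam) (hm0 : DiaOnlyZero mu)
    (hma : Admissible mu) (hb : SameBlock lam mu) (hdom : upsFrom mu ≤ upsFrom lam)
    (hne : lam ≠ mu) : ∃ lam', BruhatMove lam lam' ∧ upsFrom mu ≤ upsFrom lam' := by
  classical
  have hex : ∃ n, upsFrom mu n < upsFrom lam n := by
    by_contra! hc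
    exact hne (hb.eq_of_upsFrom_eq hl.diaOnlyZero hm0 hl.admissible hma (le_antisymm hc hdom))
  rcases hn : Nat.find hex with _ | p
  · exact exists_bruhatMove_of_upsFrom_zero_lt hl hm0 hma hb hdom (hn ▸ Nat.find_spec hex)
  have hD : upsFrom mu (p + 1) < upsFrom lam (p + 1) := hn ▸ Nat.find_spec hex
  have hp : ¬upsFrom mu p < upsFrom lam p := Nat.find_min hex (by omega)
  refine exists_bruhatMove_of_dn_or_dia hl hm0 hma hb hdom ?_ hD
  by_cases hox : lam p = Symb.o ∨ lam p = Symb.x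
  · have hlp : lam p ≠ Symb.up := by rcases hox with h | h <;> simp [h]
    have hmp : mu p ≠ Symb.up := fun h => by
      have := (hb.arrow_iff hl.diaOnlyZero hm0 p).2 (Or.inl h)
      rcases hox with h' | h' <;> simp [h'] at this
    have := upsFrom_succ_of_ne_up hl.admissible hlp
    have := upsFrom_succ_of_ne_up hma hmp
    omega
  · refine (Symb.dn_or_dia_or_up hox).resolve_right fun hup => hp ?_
    have := upsFrom_succ_of_eq_up hl.admissible hup
    have := upsFrom_eq_upsFrom_succ_add hma p
    split_ifs at this <;> omega

end Search

lemma sum_upsFrom_lt {w w' : WD} (hw : Admissible w) {N : ℕ} (hN : upsFrom w N = 0)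
    (h : upsFrom w' < upsFrom w) :
    ∑ n ∈ Finset.range N, upsFrom w' n < ∑ n ∈ Finset.range N, upsFrom w n := by
  obtain ⟨hle, n, hn⟩ := Pi.lt_def.1 h
  refine Finset.sum_lt_sum (fun k _ => hle k) ⟨n, Finset.mem_range.2 ?_, hn⟩
  by_contra hNn
  have := upsFrom_antitone hw (not_lt.1 hNn)
  omega

lemma bruhatLE_of_upsFrom_le {lam mu : WD} (hl : IsAdmissibleDiagram lam) (hm0 : DiaOnlyZero mu)
    (hma : Admissible mu) (hb : SameBlock lam mu) (hdom : upsFrom mu ≤ upsFrom lam) :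
    BruhatLE lam mu := by
  obtain ⟨N, hN⟩ := hl.admissible.exists_upsFrom_eq_zero
  induction hs : ∑ n ∈ Finset.range N, upsFrom lam n using Nat.strong_induction_on
    generalizing lam with
  | _ s ih =>
    by_cases hne : lam = mu
    · exact hne ▸ Relation.ReflTransGen.refl
    obtain ⟨lam', hmove, hdom'⟩ := exists_bruhatMove hl hm0 hma hb hdom hne
    have hlt := hmove.upsFrom_lt hl.admissible
    exact Relation.ReflTransGen.head hmove <| ih _ (hs ▸ sum_upsFrom_lt hl.admissible hN hlt)
      (hmove.isAdmissibleDiagram hl) ((hmove.sameBlock hl).trans hb) hdom'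
      (Nat.eq_zero_of_le_zero (hN ▸ hlt.le N)) rfl

theorem bruhatLE_iff_lstat_nonneg_general (lam mu : WD)
    (hl0 : DiaOnlyZero lam) (hm0 : DiaOnlyZero mu)
    (hlz : ZeroConstraint lam)
    (hla : Admissible lam) (hma : Admissible mu) (hb : SameBlock lam mu) :
    BruhatLE lam mu ↔ ∀ i : ℕ, 0 ≤ lstat lam mu i := by
  have hl : IsAdmissibleDiagram lam := ⟨hl0, hlz, hla⟩
  rw [lstat_nonneg_iff hb hl0 hm0 hlz hla hma]
  exact ⟨fun h => upsFrom_le_of_bruhatLE h hl, bruhatLE_of_upsFrom_le hl hm0 hma hb⟩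

/-- `λ ≤ μ` in the Bruhat order iff `l_i(λ,μ) ≥ 0` for all `i ≥ 0`. -/
theorem bruhatLE_iff_lstat_nonneg (lam mu : WD)
    (hl0 : DiaOnlyZero lam) (hm0 : DiaOnlyZero mu)
    (hlz : ZeroConstraint lam) (hmz : ZeroConstraint mu)
    (hla : Admissible lam) (hma : Admissible mu) (hb : SameBlock lam mu) :
    BruhatLE lam mu ↔ ∀ i : ℕ, 0 ≤ lstat lam mu i :=
  bruhatLE_iff_lstat_nonneg_general lam mu hl0 hm0 hlz hla hma hb
end

section
/- The relation ≤ on admissible weight diagrams, defined by λ ≤ μ if μ can be obtained from λ by a finite sequence of Bruhat moves (type A: ∨∧ → ∧∨ at neighboured positions; type D: initial neighboured ∧∧ → ∨∨), is a partial order; in particular it is antisymmetric. -/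
/-
Every Bruhat move deletes a `∧` at some position `j` and creates at most one new `∧`, at a
position `i < j`. Hence the sum of `n + 1` over the positions `n` of the `∧`'s, which is finite
for an admissible diagram, strictly decreases along every move, so a cycle of moves is trivial.
-/

theorem Relation.ReflTransGen.eq_of_measure_lt {α : Type*} {r : α → α → Prop}
    (P : α → Prop) (f : α → ℕ) (hr : ∀ a b, r a b → P a → P b ∧ f b < f a)
    {a b : α} (ha : P a) (hab : Relation.ReflTransGen r a b)
    (hba : Relation.ReflTransGen r b a) : a = b := by
  have descend : ∀ {x y}, Relation.ReflTransGen r x y → P x → P y ∧ f y ≤ f x := by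
    intro x y hxy hx
    induction hxy with
    | refl => exact ⟨hx, le_rfl⟩
    | tail _ hcd ih =>
      obtain ⟨hc, hfc⟩ := ih
      obtain ⟨hd, hfd⟩ := hr _ _ hcd hc
      exact ⟨hd, hfd.le.trans hfc⟩
  rcases hab.cases_head with rfl | ⟨c, hac, hcb⟩
  · rfl
  obtain ⟨hc, hfc⟩ := hr a c hac ha
  obtain ⟨hb, hfb⟩ := descend hcb hc
  have hfa := (descend hba hb).2
  omega

/-- Junk value `0` on an infinite set. -/
noncomputable def posWeight (S : Set ℕ) : ℕ := ∑ᶠ n ∈ S, (n + 1)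

theorem posWeight_lt_of_subset_insert_sdiff {S T : Set ℕ} (hS : S.Finite) {i j : ℕ}
    (hij : i < j) (hj : j ∈ S) (hT : T ⊆ insert i (S \ {j})) :
    T.Finite ∧ posWeight T < posWeight S := by
  have hT_fin : T.Finite := ((hS.sdiff (t := {j})).insert i).subset hT
  refine ⟨hT_fin, ?_⟩
  rw [posWeight, posWeight, finsum_mem_eq_finite_toFinset_sum _ hT_fin,
    finsum_mem_eq_finite_toFinset_sum _ hS]
  refine Finset.sum_lt_sum_of_subset_erase_union_singleton (d' := i)
    (hS.mem_toFinset.2 hj) (fun n hn => ?_) (by omega)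
  simp only [Set.Finite.mem_toFinset] at hn
  simpa [and_comm] using hT hn

def upSet (w : WD) : Set ℕ := {n | w n = Symb.up}

theorem upSet_subset_insert_sdiff {w w' : WD} {i j : ℕ}
    (hkeep : ∀ k, k ≠ i → k ≠ j → w' k = w k) (hj' : w' j = Symb.dn) :
    upSet w' ⊆ insert i (upSet w \ {j}) := by
  intro n hn
  by_cases hni : n = i
  · exact Or.inl hni
  have hnj : n ≠ j := by rintro rfl; simp [upSet, hj'] at hn
  exact Or.inr ⟨(hkeep n hni hnj).symm.trans hn, hnj⟩

theorem BruhatMove.exists_upSet_subset {w w' : WD} (hm : BruhatMove w w') :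
    ∃ i j, i < j ∧ j ∈ upSet w ∧ upSet w' ⊆ insert i (upSet w \ {j}) := by
  rcases hm with ⟨i, j, ⟨hij, -⟩, hkeep, hj, hj', -⟩ |
    ⟨i, j, ⟨hij, -⟩, -, hkeep, -, hj, -, hj'⟩ <;>
  exact ⟨i, j, hij, hj, upSet_subset_insert_sdiff hkeep hj'⟩

theorem BruhatMove.posWeight_upSet_lt {w w' : WD} (hm : BruhatMove w w')
    (hw : (upSet w).Finite) :
    (upSet w').Finite ∧ posWeight (upSet w') < posWeight (upSet w) := by
  obtain ⟨i, j, hij, hj, hsub⟩ := hm.exists_upSet_subset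
  exact posWeight_lt_of_subset_insert_sdiff hw hij hj hsub

/-- The Bruhat order on admissible weight diagrams is a partial order:
it is reflexive, transitive and, in particular, antisymmetric. -/
theorem bruhatLE_partialOrder :
    (∀ w : WD, BruhatLE w w) ∧
    (∀ a b c : WD, BruhatLE a b → BruhatLE b c → BruhatLE a c) ∧
    (∀ lam mu : WD, DiaOnlyZero lam → DiaOnlyZero mu →
      ZeroConstraint lam → ZeroConstraint mu →
      Admissible lam → Admissible mu →
      BruhatLE lam mu → BruhatLE mu lam → lam = mu) := by
  refine ⟨fun _ => Relation.ReflTransGen.refl, fun _ _ _ => Relation.ReflTransGen.trans, ?_⟩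
  intro lam mu _ _ _ _ hlam _ hle hge
  have hfin : (upSet lam).Finite := hlam.subset fun _ hn => Or.inr (Or.inr hn)
  exact Relation.ReflTransGen.eq_of_measure_lt (fun w => (upSet w).Finite)
    (fun w => posWeight (upSet w)) (fun _ _ hm hw => hm.posWeight_upSet_lt hw) hfin hle hge
end

section
/- An admissible weight diagram μ is simultaneously ∨∧-avoiding, ∧∧-avoiding, and ◇∧-avoiding (as subsequences of the sequence of non-∘, non-× symbols) if and only if μ is maximal in the Bruhat order within its block, i.e. no type A move (∨∧ → ∧∨ at neighboured positions) and no type D move (initial neighboured ∧∧ → ∨∨, with ◇ readable as ∧) can be applied to μ. -/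
/-- `μ` avoids the pattern `∨∧` (as a subsequence of its non-`∘`, non-`×` symbols). -/
def VeeWedgeAvoiding (w : WD) : Prop :=
  ¬∃ i j, i < j ∧ w i = Symb.dn ∧ w j = Symb.up

/-- `μ` avoids the pattern `∧∧` (as a subsequence of its non-`∘`, non-`×` symbols). -/
def WedgeWedgeAvoiding (w : WD) : Prop :=
  ¬∃ i j, i < j ∧ w i = Symb.up ∧ w j = Symb.up

/-- `μ` avoids the pattern `◇∧` (as a subsequence of its non-`∘`, non-`×` symbols). -/
def DiaWedgeAvoiding (w : WD) : Prop :=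
  ¬∃ i j, i < j ∧ w i = Symb.dia ∧ w j = Symb.up

/-- An admissible weight diagram is simultaneously `∨∧`-, `∧∧`- and `◇∧`-avoiding
iff it is maximal in the Bruhat order, i.e. no Bruhat move can be applied to it.
Key lemma: if any of the patterns occurs, a Bruhat move can be applied. -/
lemma move_of_pattern (mu : WD)
    (h : ∃ i j, i < j ∧ (mu i = Symb.dn ∨ mu i = Symb.dia ∨ mu i = Symb.up) ∧
      mu j = Symb.up) : ∃ mu' : WD, BruhatMove mu mu' := by
  classical
  set Q : ℕ → Prop := fun i => mu i = Symb.dn ∨ mu i = Symb.dia ∨ mu i = Symb.up with hQ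
  set P : ℕ → Prop := fun j => mu j = Symb.up ∧ ∃ i, i < j ∧ Q i with hP
  have hPex : ∃ j, P j := by
    obtain ⟨i, j, hij, hi, hj⟩ := h
    exact ⟨j, hj, i, hij, hi⟩
  set j0 := Nat.find hPex with hj0def
  have hPj0 : P j0 := Nat.find_spec hPex
  obtain ⟨hj0up, i1, hi1lt, hQi1⟩ := hPj0
  have hi1le : i1 ≤ j0 - 1 := Nat.le_sub_one_of_lt hi1lt
  set i0 := Nat.findGreatest Q (j0 - 1) with hi0def
  have hQi0 : Q i0 := Nat.findGreatest_spec hi1le hQi1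
  have hi0le : i0 ≤ j0 - 1 := Nat.findGreatest_le _
  have hi0lt : i0 < j0 := by omega
  have hneigh : Neigh mu i0 j0 := by
    refine ⟨hi0lt, fun k hk1 hk2 => ?_⟩
    have hnQ : ¬ Q k := Nat.findGreatest_is_greatest hk1 (Nat.le_sub_one_of_lt hk2)
    cases hmk : mu k with
    | o => exact Or.inl rfl
    | x => exact Or.inr rfl
    | dn => exact absurd (Or.inl hmk) hnQ
    | up => exact absurd (Or.inr (Or.inr hmk)) hnQ
    | dia => exact absurd (Or.inr (Or.inl hmk)) hnQ
  have hij : i0 ≠ j0 := ne_of_lt hi0lt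
  rcases hQi0 with hdn | hdia | hup
  · -- type A move, ∨∧ → ∧∨
    refine ⟨fun k => if k = i0 then Symb.up else if k = j0 then Symb.dn else mu k,
      Or.inl ⟨i0, j0, hneigh, ?_, hj0up, ?_, Or.inl ⟨hdn, ?_⟩⟩⟩
    · intro k hk1 hk2; simp [hk1, hk2]
    · simp [hij.symm]
    · simp
  · -- type A move with diamond
    refine ⟨fun k => if k = j0 then Symb.dn else mu k,
      Or.inl ⟨i0, j0, hneigh, ?_, hj0up, ?_, Or.inr ⟨hdia, ?_⟩⟩⟩
    · intro k _ hk2; simp [hk2]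
    · simp
    · simp [hij, hdia]
  · -- type D move
    have hpre : ∀ k, k < i0 → mu k = Symb.o ∨ mu k = Symb.x := by
      intro k hk
      have hnP : ¬ P i0 := Nat.find_min hPex hi0lt
      cases hmk : mu k with
      | o => exact Or.inl rfl
      | x => exact Or.inr rfl
      | dn => exact absurd ⟨hup, k, hk, Or.inl hmk⟩ hnP
      | up => exact absurd ⟨hup, k, hk, Or.inr (Or.inr hmk)⟩ hnP
      | dia => exact absurd ⟨hup, k, hk, Or.inr (Or.inl hmk)⟩ hnP
    refine ⟨fun k => if k = i0 ∨ k = j0 then Symb.dn else mu k,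
      Or.inr ⟨i0, j0, hneigh, hpre, ?_, hup, hj0up, ?_, ?_⟩⟩
    · intro k hk1 hk2; simp [hk1, hk2]
    · simp
    · simp

/-- An admissible weight diagram is simultaneously `∨∧`-, `∧∧`- and `◇∧`-avoiding
iff it is maximal in the Bruhat order, i.e. no Bruhat move can be applied to it. -/
theorem avoiding_iff_bruhat_maximal (mu : WD)
    (h0 : DiaOnlyZero mu) (hz : ZeroConstraint mu) (ha : Admissible mu) :
    (VeeWedgeAvoiding mu ∧ WedgeWedgeAvoiding mu ∧ DiaWedgeAvoiding mu) ↔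
      ¬∃ mu' : WD, BruhatMove mu mu' := by
  constructor
  · rintro ⟨hv, hw, hd⟩ ⟨mu', hm⟩
    rcases hm with ⟨i, j, ⟨hij, _⟩, _, hj, _, hc⟩ | ⟨i, j, ⟨hij, _⟩, _, _, hi, hj, _, _⟩
    · rcases hc with ⟨hi, _⟩ | ⟨hi, _⟩
      · exact hv ⟨i, j, hij, hi, hj⟩
      · exact hd ⟨i, j, hij, hi, hj⟩
    · exact hw ⟨i, j, hij, hi, hj⟩
  · intro hmax
    refine ⟨fun ⟨i, j, hij, hi, hj⟩ => hmax (move_of_pattern mu ⟨i, j, hij, Or.inl hi, hj⟩),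
      fun ⟨i, j, hij, hi, hj⟩ => hmax (move_of_pattern mu ⟨i, j, hij, Or.inr (Or.inr hi), hj⟩),
      fun ⟨i, j, hij, hi, hj⟩ => hmax (move_of_pattern mu ⟨i, j, hij, Or.inr (Or.inl hi), hj⟩)⟩
end

section
/- Fix a finite set P of positions for ∘'s and ×'s on the half-integer line L (with ∘ and × positions disjoint) and a parity class ε ∈ {0,1}. Among all admissible weight diagrams with ∘'s and ×'s exactly at the prescribed positions and with number of ∧'s congruent to ε mod 2, there is exactly one weight diagram μ that is ∨∧-, ∧∧-, and ◇∧-avoiding, namely: all positions outside P carry ∨, except possibly the leftmost free position carries ∧ (if ε = 1). -/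
/-- The leftmost free position: the least vertex not occupied by `∘` or `×`. -/
noncomputable def leastFree (O Xs : Finset ℕ) : ℕ :=
  sInf {n : ℕ | n ∉ O ∧ n ∉ Xs}

/-- The canonical weight diagram of the block given by `∘`'s at `O`, `×`'s at `Xs`, and
parity `ε`: all free positions carry `∨`, except that the leftmost free position carries
`∧` when `ε = 1`. -/
noncomputable def canonicalWD (O Xs : Finset ℕ) (ε : ℕ) : WD := fun n =>
  if n ∈ O then Symb.o
  else if n ∈ Xs then Symb.x
  else if ε = 1 ∧ n = leastFree O Xs then Symb.up
  else Symb.dn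

/-- Membership in the prescribed block together with pattern avoidance: `w` is an
admissible diamond-free weight diagram with `∘`'s exactly at `O`, `×`'s exactly at `Xs`,
number of `∧`'s congruent to `ε` mod `2`, and `w` is `∨∧`-, `∧∧`- and `◇∧`-avoiding. -/
def BlockAvoidPred (O Xs : Finset ℕ) (ε : ℕ) (w : WD) : Prop :=
  (∀ n, w n = Symb.o ↔ n ∈ O) ∧ (∀ n, w n = Symb.x ↔ n ∈ Xs) ∧
  (∀ n, w n ≠ Symb.dia) ∧ Admissible w ∧ upCount w % 2 = ε ∧
  VeeWedgeAvoiding w ∧ WedgeWedgeAvoiding w ∧ DiaWedgeAvoiding w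

lemma leastFree_spec (O Xs : Finset ℕ) :
    (leastFree O Xs ∉ O ∧ leastFree O Xs ∉ Xs) ∧
    ∀ n < leastFree O Xs, n ∈ O ∨ n ∈ Xs := by
  have hfin : (↑O ∪ ↑Xs : Set ℕ).Finite := (O.finite_toSet.union Xs.finite_toSet)
  have hne : {n : ℕ | n ∉ O ∧ n ∉ Xs}.Nonempty := by
    have : (↑O ∪ ↑Xs : Set ℕ)ᶜ.Nonempty := by
      rcases (hfin.infinite_compl).nonempty with ⟨a, ha⟩
      exact ⟨a, ha⟩
    rcases this with ⟨a, ha⟩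
    exact ⟨a, by simpa using ha⟩
  constructor
  · exact Nat.sInf_mem hne
  · intro n hn
    by_contra h
    push_neg at h
    exact absurd (Nat.sInf_le (show n ∈ {n : ℕ | n ∉ O ∧ n ∉ Xs} from h)) (not_le.mpr hn)

/-- Fixing finitely many positions for the `∘`'s and `×`'s and a parity class `ε`,
there is exactly one pattern-avoiding admissible weight diagram in the corresponding
block, namely the canonical one: all free positions carry `∨`, except possibly the
leftmost free position carries `∧` (if `ε = 1`). -/
theorem unique_avoiding_in_block (O Xs : Finset ℕ) (hdisj : Disjoint O Xs)
    (ε : ℕ) (hε : ε ≤ 1) :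
    BlockAvoidPred O Xs ε (canonicalWD O Xs ε) ∧
    ∀ w : WD, BlockAvoidPred O Xs ε w → w = canonicalWD O Xs ε := by
  obtain ⟨⟨hlO, hlX⟩, hmin⟩ := leastFree_spec O Xs
  set lF := leastFree O Xs with hlFdef
  have hOX : ∀ n, n ∈ Xs → n ∉ O := fun n hn => Finset.disjoint_right.mp hdisj hn
  have hco : ∀ n, canonicalWD O Xs ε n = Symb.o ↔ n ∈ O := by
    intro n; unfold canonicalWD; split_ifs <;> simp_all
  have hcx : ∀ n, canonicalWD O Xs ε n = Symb.x ↔ n ∈ Xs := by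
    intro n; unfold canonicalWD; split_ifs with h1 h2 <;> simp_all
    exact fun h => hOX n h h1
  have hcup : ∀ n, canonicalWD O Xs ε n = Symb.up ↔ (n ∉ O ∧ n ∉ Xs ∧ ε = 1 ∧ n = lF) := by
    intro n; unfold canonicalWD; split_ifs <;> simp_all
  have hcdn : ∀ n, canonicalWD O Xs ε n = Symb.dn ↔
      (n ∉ O ∧ n ∉ Xs ∧ ¬(ε = 1 ∧ n = lF)) := by
    intro n; unfold canonicalWD; split_ifs <;> simp_all
  have hcnd : ∀ n, canonicalWD O Xs ε n ≠ Symb.dia := by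
    intro n; unfold canonicalWD; split_ifs <;> simp
  have hupset : {n : ℕ | canonicalWD O Xs ε n = Symb.up} =
      if ε = 1 then {lF} else ∅ := by
    ext n
    rcases eq_or_ne ε 1 with h | h
    · subst h
      simp only [Set.mem_setOf_eq, Set.mem_singleton_iff, if_pos rfl]
      rw [hcup]
      constructor
      · rintro ⟨-, -, -, h⟩; exact h
      · rintro rfl; exact ⟨hlO, hlX, rfl, rfl⟩
    · simp [hcup, h]
  have hupc : upCount (canonicalWD O Xs ε) = ε := by
    interval_cases ε <;> unfold upCount <;> rw [hupset] <;> simp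
  constructor
  · refine ⟨hco, hcx, hcnd, ?_, ?_, ?_, ?_, ?_⟩
    · apply Set.Finite.subset (((O.finite_toSet.union Xs.finite_toSet).union
        (Set.finite_singleton lF)))
      intro n hn
      rcases hn with h | h | h
      · exact Or.inl (Or.inl ((hco n).mp h))
      · exact Or.inl (Or.inr ((hcx n).mp h))
      · exact Or.inr ((hcup n).mp h).2.2.2
    · rw [hupc]; omega
    · rintro ⟨i, j, hij, hi, hj⟩
      obtain ⟨hiO, hiX, hne⟩ := (hcdn i).mp hi
      obtain ⟨-, -, hε1, hjl⟩ := (hcup j).mp hj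
      subst hjl
      rcases hmin i hij with h | h
      · exact hiO h
      · exact hiX h
    · rintro ⟨i, j, hij, hi, hj⟩
      have h1 := ((hcup i).mp hi).2.2.2
      have h2 := ((hcup j).mp hj).2.2.2
      omega
    · rintro ⟨i, j, hij, hi, hj⟩
      exact hcnd i hi
  · rintro w ⟨ho, hx, hnd, hadm, hpar, hva, hwa, hda⟩
    have hfree : ∀ n, n ∉ O → n ∉ Xs → w n = Symb.dn ∨ w n = Symb.up := by
      intro n hnO hnX
      cases h : w n with
      | o => exact absurd ((ho n).mp h) hnO
      | x => exact absurd ((hx n).mp h) hnX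
      | dia => exact absurd h (hnd n)
      | dn => exact Or.inl rfl
      | up => exact Or.inr rfl
    have hupl : ∀ m, w m = Symb.up → m = lF := by
      intro m hm
      have hmO : m ∉ O := fun h => by simp [(ho m).mpr h] at hm
      have hmX : m ∉ Xs := fun h => by simp [(hx m).mpr h] at hm
      have hle : lF ≤ m := Nat.sInf_le ⟨hmO, hmX⟩
      rcases hle.lt_or_eq with hlt | heq
      · rcases hfree lF hlO hlX with hd | hu
        · exact absurd ⟨lF, m, hlt, hd, hm⟩ hva
        · exact absurd ⟨lF, m, hlt, hu, hm⟩ hwa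
      · exact heq.symm
    have hsub : {n : ℕ | w n = Symb.up}.Subsingleton := by
      intro a ha b hb
      rw [hupl a ha, hupl b hb]
    rcases hsub.eq_empty_or_singleton with hemp | ⟨a, ha⟩
    · have hc0 : upCount w = 0 := by unfold upCount; rw [hemp]; simp
      have hε0 : ε = 0 := by omega
      funext n
      by_cases hnO : n ∈ O
      · rw [(ho n).mpr hnO, (hco n).mpr hnO]
      by_cases hnX : n ∈ Xs
      · rw [(hx n).mpr hnX, (hcx n).mpr hnX]
      rcases hfree n hnO hnX with hd | hu
      · rw [hd, ((hcdn n).mpr ⟨hnO, hnX, by simp [hε0]⟩)]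
      · exact absurd (Set.eq_empty_iff_forall_notMem.mp hemp n hu) (fun h => h)
    · have hc1 : upCount w = 1 := by unfold upCount; rw [ha]; simp
      have hε1 : ε = 1 := by omega
      have haup : w a = Symb.up := by
        have : a ∈ ({a} : Set ℕ) := rfl
        rw [← ha] at this; exact this
      have hal : a = lF := hupl a haup
      funext n
      by_cases hnO : n ∈ O
      · rw [(ho n).mpr hnO, (hco n).mpr hnO]
      by_cases hnX : n ∈ Xs
      · rw [(hx n).mpr hnX, (hcx n).mpr hnX]
      by_cases hnl : n = lF
      · rw [hnl, ← hal, haup, (hcup a).mpr ⟨hal ▸ hlO, hal ▸ hlX, hε1, hal⟩]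
      rcases hfree n hnO hnX with hd | hu
      · rw [hd, (hcdn n).mpr ⟨hnO, hnX, by simp [hnl]⟩]
      · exact absurd (hupl n hu) hnl
end

section
/- Define f : ℕ × ℕ → ℤ recursively on OSp(1|2) highest weights by the action of translation functors: starting from the multiset {0} at d = 0, at each step each weight n ≥ 1 contributes one copy each of n+1, n, and n−1, while the weight 0 contributes one copy of 1. Then the multiplicity of the weight n after d steps equals ∑_{i=n}^{d} (−1)^{i+n} · C(d,i) · C(i, ⌊(i−n)/2⌋). -/
open Finset

/-- One application of `⊕_i θ_i` to a multiset of `OSp(1|2)` highest weights: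
each weight `n ≥ 1` contributes one copy each of `n+1`, `n` and `n-1`, while the
weight `0` contributes one copy of `1`. -/
def ospStep (M : Multiset ℕ) : Multiset ℕ :=
  M.bind fun n => {n + 1} + (if 0 < n then ({n, n - 1} : Multiset ℕ) else 0)

private lemma ospStep_cons (a : ℕ) (M : Multiset ℕ) :
    ospStep (a ::ₘ M) =
      ({a + 1} + (if 0 < a then ({a, a - 1} : Multiset ℕ) else 0)) + ospStep M :=
  Multiset.cons_bind _ _ _

private lemma count_ospStep_zero (M : Multiset ℕ) :
    (ospStep M).count 0 = M.count 1 := by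
  induction M using Multiset.induction_on with
  | empty => simp [ospStep]
  | cons a M ih =>
    rw [ospStep_cons, Multiset.count_add, ih, Multiset.count_cons]
    rcases a with _ | a
    · simp
    · rcases a with _ | a <;>
        simp [Multiset.count_add, Multiset.count_singleton, Multiset.count_cons,
          Multiset.insert_eq_cons]
      omega

private lemma count_ospStep_succ (M : Multiset ℕ) (n : ℕ) :
    (ospStep M).count (n + 1) = M.count n + M.count (n + 1) + M.count (n + 2) := by
  induction M using Multiset.induction_on with
  | empty => simp [ospStep]
  | cons a M ih =>
    rw [ospStep_cons, Multiset.count_add, ih, Multiset.count_cons,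
      Multiset.count_cons, Multiset.count_cons]
    have : Multiset.count (n+1) ({a + 1} + (if 0 < a then ({a, a - 1} : Multiset ℕ) else 0))
        = (if n = a then 1 else 0) + (if n + 1 = a then 1 else 0) + (if n + 2 = a then 1 else 0) := by
      rcases a with _ | a
      · simp [Multiset.count_singleton]
      · simp [Multiset.count_add, Multiset.count_singleton, Multiset.count_cons,
          Multiset.insert_eq_cons]
        omega
    rw [this]
    ring

private def g (n d : ℕ) : ℤ :=
  ∑ k ∈ Finset.range (d + 2), (-1 : ℤ) ^ k * (d.choose (n + k)) * ((n + k).choose (k / 2))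

private lemma F_eq_g (n d : ℕ) :
    (∑ i ∈ Finset.Icc n d, (-1 : ℤ) ^ (i + n) * (d.choose i) * (i.choose ((i - n) / 2)))
      = g n d := by
  rw [← Finset.Ico_add_one_right_eq_Icc, Finset.sum_Ico_eq_sum_range]
  have h1 : ∀ k, (-1 : ℤ) ^ (n + k + n) * (d.choose (n + k)) * ((n + k).choose ((n + k - n) / 2))
      = (-1 : ℤ) ^ k * (d.choose (n + k)) * ((n + k).choose (k / 2)) := by
    intro k
    have e1 : n + k - n = k := by omega
    have e2 : (-1 : ℤ) ^ (n + k + n) = (-1) ^ k := by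
      rw [show n + k + n = k + 2 * n by omega, pow_add, pow_mul]
      norm_num
    rw [e1, e2]
  calc ∑ k ∈ range (d + 1 - n), (-1 : ℤ) ^ (n + k + n) * (d.choose (n + k))
          * ((n + k).choose ((n + k - n) / 2))
      = ∑ k ∈ range (d + 1 - n), (-1 : ℤ) ^ k * (d.choose (n + k)) * ((n + k).choose (k / 2)) :=
        Finset.sum_congr rfl fun k _ => h1 k
    _ = g n d := by
        apply Finset.sum_subset (Finset.range_subset_range.2 (by omega : d + 1 - n ≤ d + 2))
        intro k hk hk'
        simp only [Finset.mem_range] at hk hk'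
        have : d < n + k := by omega
        simp [Nat.choose_eq_zero_of_lt this]

private lemma telescope (w : ℕ → ℤ) (m : ℕ) :
    ∑ k ∈ range (m + 1), (-1 : ℤ) ^ k * (w k + w (k + 1))
      = w 0 + (-1) ^ m * w (m + 1) := by
  induction m with
  | zero => simp
  | succ m ih =>
    rw [Finset.sum_range_succ, ih, pow_succ]
    ring

private lemma pad (m j : ℕ) (f : ℕ → ℤ) (h : ∀ k, m ≤ k → f k = 0) :
    ∑ k ∈ range (m + j), f k = ∑ k ∈ range m, f k := by
  refine (Finset.sum_subset (Finset.range_subset_range.2 (by omega : m ≤ m + j)) ?_).symm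
  intro k hk hk'
  simp only [Finset.mem_range] at hk hk'
  exact h k (by omega)

private lemma L2 (n d : ℕ) : g (n + 1) (d + 1) = g (n + 2) d + g (n + 1) d + g n d := by
  have hsplit : g (n + 1) (d + 1) =
      (∑ k ∈ range (d + 3), (-1 : ℤ) ^ k * (d.choose (n + k)) * ((n + 1 + k).choose (k / 2)))
      + ∑ k ∈ range (d + 3), (-1 : ℤ) ^ k * (d.choose (n + 1 + k)) * ((n + 1 + k).choose (k / 2)) := by
    rw [g, show d + 1 + 2 = d + 3 from rfl, ← Finset.sum_add_distrib]
    refine Finset.sum_congr rfl fun k _ => ?_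
    have e : (d + 1).choose (n + 1 + k) = d.choose (n + k) + d.choose (n + 1 + k) := by
      rw [show n + 1 + k = (n + k) + 1 by ring]
      exact Nat.choose_succ_succ d (n + k)
    rw [e]
    push_cast
    ring
  have hA : (∑ k ∈ range (d + 3), (-1 : ℤ) ^ k * (d.choose (n + 1 + k)) * ((n + 1 + k).choose (k / 2)))
      = g (n + 1) d := by
    rw [g, show d + 3 = (d + 2) + 1 from rfl]
    exact pad (d + 2) 1 _ fun k hk => by
      have : d < n + 1 + k := by omega
      simp [Nat.choose_eq_zero_of_lt this]
  -- the B part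
  have hB : (∑ k ∈ range (d + 3), (-1 : ℤ) ^ k * (d.choose (n + k)) * ((n + 1 + k).choose (k / 2)))
      = g (n + 2) d + g n d := by
    rw [show d + 3 = (d + 1) + 1 + 1 from rfl, Finset.sum_range_succ', Finset.sum_range_succ']
    have hterm : ∀ k, (-1 : ℤ) ^ (k + 1 + 1) * (d.choose (n + (k + 1 + 1)))
          * ((n + 1 + (k + 1 + 1)).choose ((k + 1 + 1) / 2))
        = (-1 : ℤ) ^ k * (d.choose (n + 2 + k)) * ((n + 2 + k).choose (k / 2))
          + (-1 : ℤ) ^ k * (d.choose (n + 2 + k)) * ((n + 2 + k).choose (k / 2 + 1)) := by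
      intro k
      have e1 : (-1 : ℤ) ^ (k + 1 + 1) = (-1) ^ k := by rw [pow_succ, pow_succ]; ring
      have e2 : (k + 1 + 1) / 2 = k / 2 + 1 := by omega
      have e3 : n + (k + 1 + 1) = n + 2 + k := by ring
      have e4 : n + 1 + (k + 1 + 1) = (n + 2 + k) + 1 := by ring
      have e5 : ((n + 2 + k) + 1).choose (k / 2 + 1)
          = (n + 2 + k).choose (k / 2) + (n + 2 + k).choose (k / 2 + 1) :=
        Nat.choose_succ_succ _ _
      rw [e1, e2, e3, e4, e5]
      push_cast
      ring
    rw [Finset.sum_congr rfl fun k _ => hterm k, Finset.sum_add_distrib]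
    have hB1 : (∑ k ∈ range (d + 1), (-1 : ℤ) ^ k * (d.choose (n + 2 + k)) * ((n + 2 + k).choose (k / 2)))
        = g (n + 2) d := by
      rw [g, show d + 2 = (d + 1) + 1 from rfl]
      exact (pad (d + 1) 1 _ fun k hk => by
        have : d < n + 2 + k := by omega
        simp [Nat.choose_eq_zero_of_lt this]).symm
    have hB2 : g n d = (∑ k ∈ range (d + 1), (-1 : ℤ) ^ k * (d.choose (n + 2 + k)) * ((n + 2 + k).choose (k / 2 + 1)))
        + ((d.choose n : ℤ) - (d.choose (n + 1) : ℤ)) := by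
      rw [g, show d + 2 = d + 1 + 1 from rfl, Finset.sum_range_succ', Finset.sum_range_succ']
      have hterm2 : ∀ k, (-1 : ℤ) ^ (k + 1 + 1) * (d.choose (n + (k + 1 + 1)))
            * ((n + (k + 1 + 1)).choose ((k + 1 + 1) / 2))
          = (-1 : ℤ) ^ k * (d.choose (n + 2 + k)) * ((n + 2 + k).choose (k / 2 + 1)) := by
        intro k
        have e1 : (-1 : ℤ) ^ (k + 1 + 1) = (-1) ^ k := by rw [pow_succ, pow_succ]; ring
        have e2 : (k + 1 + 1) / 2 = k / 2 + 1 := by omega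
        have e3 : n + (k + 1 + 1) = n + 2 + k := by ring
        rw [e1, e2, e3]
      rw [Finset.sum_congr rfl fun k _ => hterm2 k]
      have hpad : (∑ k ∈ range (d + 1), (-1 : ℤ) ^ k * (d.choose (n + 2 + k)) * ((n + 2 + k).choose (k / 2 + 1)))
          = ∑ k ∈ range d, (-1 : ℤ) ^ k * (d.choose (n + 2 + k)) * ((n + 2 + k).choose (k / 2 + 1)) := by
        rw [show d + 1 = d + 1 from rfl]
        exact pad d 1 _ fun k hk => by
          have : d < n + 2 + k := by omega
          simp [Nat.choose_eq_zero_of_lt this]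
      rw [hpad]
      simp [Nat.choose_succ_succ]
      ring
    rw [hB1, hB2]
    simp [Nat.choose_succ_succ]
    ring
  rw [hsplit, hA, hB]
  ring

private lemma c2 (k : ℕ) :
    (k + 2).choose (k / 2 + 1) + (k + 2).choose ((k + 1) / 2) = (k + 3).choose ((k + 3) / 2) := by
  rcases Nat.even_or_odd k with ⟨j, rfl⟩ | ⟨j, rfl⟩
  · have e1 : (j + j) / 2 + 1 = j + 1 := by omega
    have e2 : (j + j + 1) / 2 = j := by omega
    have e3 : (j + j + 3) / 2 = j + 1 := by omega
    rw [e1, e2, e3, show j + j + 3 = (j + j + 2) + 1 by ring,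
      Nat.choose_succ_succ (j + j + 2) j]
    ring
  · have e1 : (2 * j + 1) / 2 + 1 = j + 1 := by omega
    have e2 : (2 * j + 1 + 1) / 2 = j + 1 := by omega
    have e3 : (2 * j + 1 + 3) / 2 = j + 2 := by omega
    rw [e1, e2, e3, show 2 * j + 1 + 3 = (2 * j + 3) + 1 by ring,
      Nat.choose_succ_succ (2 * j + 3) (j + 1)]
    have e4 : (2 * j + 3).choose (j + 2) = (2 * j + 3).choose (j + 1) := by
      conv_lhs => rw [show j + 2 = (2 * j + 3) - (j + 1) by omega]
      exact Nat.choose_symm (show j + 1 ≤ 2 * j + 3 by omega)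
    have e5 : (2 * j + 1 + 2) = 2 * j + 3 := by ring
    rw [e5, e4]

private lemma L3 (d : ℕ) : g 0 (d + 1) = g 1 d := by
  have hL : g 0 (d + 1) =
      (∑ k ∈ range (d + 1), (-1 : ℤ) ^ k * ((d + 1).choose (k + 2)) * ((k + 2).choose (k / 2 + 1)))
        + (1 - ((d : ℤ) + 1)) := by
    rw [g, show d + 1 + 2 = d + 1 + 1 + 1 from rfl, Finset.sum_range_succ', Finset.sum_range_succ']
    have hterm : ∀ k, (-1 : ℤ) ^ (k + 1 + 1) * ((d + 1).choose (0 + (k + 1 + 1)))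
          * ((0 + (k + 1 + 1)).choose ((k + 1 + 1) / 2))
        = (-1 : ℤ) ^ k * ((d + 1).choose (k + 2)) * ((k + 2).choose (k / 2 + 1)) := by
      intro k
      have e1 : (-1 : ℤ) ^ (k + 1 + 1) = (-1) ^ k := by rw [pow_succ, pow_succ]; ring
      have e2 : (k + 1 + 1) / 2 = k / 2 + 1 := by omega
      have e3 : 0 + (k + 1 + 1) = k + 2 := by ring
      rw [e1, e2, e3]
    rw [Finset.sum_congr rfl fun k _ => hterm k]
    norm_num
    ring
  have hR : g 1 d =
      (d : ℤ) - ∑ k ∈ range (d + 1), (-1 : ℤ) ^ k * (d.choose (k + 2)) * ((k + 2).choose ((k + 1) / 2)) := by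
    rw [g, show d + 2 = d + 1 + 1 from rfl, Finset.sum_range_succ']
    have hterm : ∀ k, (-1 : ℤ) ^ (k + 1) * (d.choose (1 + (k + 1)))
          * ((1 + (k + 1)).choose ((k + 1) / 2))
        = -((-1 : ℤ) ^ k * (d.choose (k + 2)) * ((k + 2).choose ((k + 1) / 2))) := by
      intro k
      have e1 : (-1 : ℤ) ^ (k + 1) = -(-1) ^ k := by rw [pow_succ]; ring
      have e3 : 1 + (k + 1) = k + 2 := by ring
      rw [e1, e3]
      ring
    rw [Finset.sum_congr rfl fun k _ => hterm k, Finset.sum_neg_distrib]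
    norm_num
    ring
  rw [hL, hR]
  have key : (∑ k ∈ range (d + 1), (-1 : ℤ) ^ k * ((d + 1).choose (k + 2)) * ((k + 2).choose (k / 2 + 1)))
      + ∑ k ∈ range (d + 1), (-1 : ℤ) ^ k * (d.choose (k + 2)) * ((k + 2).choose ((k + 1) / 2))
      = 2 * d := by
    set w : ℕ → ℤ := fun k => (d.choose (k + 1)) * ((k + 2).choose ((k + 2) / 2)) with hw
    have hterm : ∀ k, (-1 : ℤ) ^ k * ((d + 1).choose (k + 2)) * ((k + 2).choose (k / 2 + 1))
          + (-1 : ℤ) ^ k * (d.choose (k + 2)) * ((k + 2).choose ((k + 1) / 2))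
        = (-1 : ℤ) ^ k * (w k + w (k + 1)) := by
      intro k
      have ep : (d + 1).choose (k + 2) = d.choose (k + 1) + d.choose (k + 2) := by
        rw [show k + 2 = (k + 1) + 1 from rfl]
        exact Nat.choose_succ_succ d (k + 1)
      have ec2 := c2 k
      have e2 : (k + 2) / 2 = k / 2 + 1 := by omega
      simp only [hw]
      rw [ep, e2, show k + 1 + 2 = k + 3 from rfl]
      rw [← ec2]
      push_cast
      ring
    rw [← Finset.sum_add_distrib, Finset.sum_congr rfl fun k _ => hterm k, telescope w d]
    have h0 : w 0 = 2 * d := by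
      simp only [hw]
      norm_num [Nat.choose_one_right, Nat.choose]
      ring
    have h1 : w (d + 1) = 0 := by
      simp only [hw]
      have : d < d + 1 + 1 := by omega
      simp [Nat.choose_eq_zero_of_lt this]
    rw [h0, h1]
    ring
  linarith [key]

private lemma L1 (n : ℕ) : g n 0 = if n = 0 then 1 else 0 := by
  rw [g]
  rcases n with _ | n
  · simp [Finset.sum_range_succ]
  · simp [Finset.sum_range_succ, Nat.choose_eq_zero_of_lt]

/-- Starting from the multiset `{0}` at `d = 0`, the multiplicity of the weight `n` after
`d` steps equals `∑_{i=n}^{d} (-1)^{i+n} C(d,i) C(i,⌊(i-n)/2⌋)`. -/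
theorem ospMult_eq_alternating_sum (n d : ℕ) :
    (((ospStep^[d]) {0}).count n : ℤ) =
      ∑ i ∈ Finset.Icc n d,
        (-1 : ℤ) ^ (i + n) * (d.choose i) * (i.choose ((i - n) / 2)) := by
  induction d generalizing n with
  | zero =>
    simp only [Function.iterate_zero, id]
    rcases n with _ | n
    · simp
    · rw [Finset.Icc_eq_empty (by omega)]
      simp [Multiset.count_singleton]
  | succ d ih =>
    rw [Function.iterate_succ_apply', F_eq_g]
    rcases n with _ | n
    · rw [count_ospStep_zero, L3, ← F_eq_g, ih]
    · rw [count_ospStep_succ, L2, ← F_eq_g, ← F_eq_g, ← F_eq_g, ← ih, ← ih, ← ih]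
      push_cast
      ring
end
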